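/- arXiv:1212.3919 — 3 statements merged into one kernel-verified Lean document; each statement's English description precedes it below -/
import Mathlib

section
/- Let a > 0, x, y nonnegative C¹ functions and D ≥ 0 satisfying (d/dt)(x² + y²) + D ≤ a(x² + y² + √(2(x² + y²)))D. If x(0)² + y(0)² + √(2(x(0)² + y(0)²)) < 1/a, then t ↦ x(t)² + y(t)² is nonincreasing on [0,∞). -/
/-!
Along the solution, `u = x² + y²` satisfies `u' ≤ (a φ(u) - 1) D` with `φ(v) = v + √(2v)`
monotone, so `u` cannot increase while `φ(u) < 1/a`. A first time at which `φ(u)` reached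
`1/a` would therefore have `u` no larger than at time `0`, where `φ(u) < 1/a`: no such time
exists, and `u' ≤ 0` throughout.
-/

open Set

theorem nonpos_of_add_le_mul_of_lt_one {d D k : ℝ} (hD : 0 ≤ D) (h : d + D ≤ k * D)
    (hk : k < 1) : d ≤ 0 := by
  nlinarith

section Barrier

variable {f g : ℝ → ℝ} {t₀ c : ℝ}

theorem lt_of_deriv_nonpos_while_lt (hf : ContinuousOn f (Ici t₀))
    (hf' : DifferentiableOn ℝ f (Ioi t₀)) (hg : Monotone g) (hgc : Continuous g)
    (h₀ : g (f t₀) < c) (hderiv : ∀ t, t₀ < t → g (f t) < c → deriv f t ≤ 0) :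
    ∀ t, t₀ ≤ t → g (f t) < c := by
  by_contra! h
  obtain ⟨t₁, ht₁, hc⟩ := h
  set S := Ici t₀ ∩ (g ∘ f) ⁻¹' Ici c
  have hS : IsClosed S :=
    (hgc.comp_continuousOn hf).preimage_isClosed_of_isClosed isClosed_Ici isClosed_Ici
  have hSbdd : BddBelow S := ⟨t₀, fun s hs => hs.1⟩
  obtain ⟨hT₀, hTc⟩ : sInf S ∈ S := hS.csInf_mem ⟨t₁, ht₁, hc⟩ hSbdd
  have hbefore : ∀ s ∈ Ico t₀ (sInf S), g (f s) < c := fun s hs =>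
    not_le.mp fun hcs => (csInf_le hSbdd ⟨hs.1, hcs⟩).not_gt hs.2
  have hanti : AntitoneOn f (Icc t₀ (sInf S)) := by
    refine antitoneOn_of_deriv_nonpos (convex_Icc _ _) (hf.mono Icc_subset_Ici_self) ?_ ?_ <;>
      rw [interior_Icc]
    · exact hf'.mono Ioo_subset_Ioi_self
    · exact fun s hs => hderiv s hs.1 (hbefore s (Ioo_subset_Ico_self hs))
  have hfT : f (sInf S) ≤ f t₀ :=
    hanti (left_mem_Icc.mpr hT₀) (right_mem_Icc.mpr hT₀) hT₀
  exact (hTc.trans (hg hfT)).not_gt h₀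

theorem antitoneOn_Ici_of_deriv_nonpos_while_lt (hf : ContinuousOn f (Ici t₀))
    (hf' : DifferentiableOn ℝ f (Ioi t₀)) (hg : Monotone g) (hgc : Continuous g)
    (h₀ : g (f t₀) < c) (hderiv : ∀ t, t₀ < t → g (f t) < c → deriv f t ≤ 0) :
    AntitoneOn f (Ici t₀) := by
  refine antitoneOn_of_deriv_nonpos (convex_Ici t₀) hf ?_ ?_ <;> rw [interior_Ici]
  · exact hf'
  · exact fun t ht =>
      hderiv t ht (lt_of_deriv_nonpos_while_lt hf hf' hg hgc h₀ hderiv t ht.le)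

end Barrier

theorem nonlinear_gronwall_monotone_general
    (a : ℝ) (ha : 0 < a) (x y D : ℝ → ℝ)
    (hD : ∀ t, 0 ≤ t → 0 ≤ D t)
    (hx1 : ContDiffOn ℝ 1 x (Set.Ici 0)) (hy1 : ContDiffOn ℝ 1 y (Set.Ici 0))
    (hineq : ∀ t, 0 ≤ t →
      deriv (fun s => x s ^ 2 + y s ^ 2) t + D t ≤
        a * (x t ^ 2 + y t ^ 2 + Real.sqrt (2 * (x t ^ 2 + y t ^ 2))) * D t)
    (h0 : x 0 ^ 2 + y 0 ^ 2 + Real.sqrt (2 * (x 0 ^ 2 + y 0 ^ 2)) < 1 / a) :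
    AntitoneOn (fun t => x t ^ 2 + y t ^ 2) (Set.Ici 0) := by
  have hu : ContDiffOn ℝ 1 (fun t => x t ^ 2 + y t ^ 2) (Ici 0) := (hx1.pow 2).add (hy1.pow 2)
  have hφ : Monotone fun v : ℝ => v + √(2 * v) := fun v w hvw =>
    add_le_add hvw (Real.sqrt_le_sqrt (by linarith))
  refine antitoneOn_Ici_of_deriv_nonpos_while_lt hu.continuousOn
    ((hu.differentiableOn one_ne_zero).mono Ioi_subset_Ici_self) hφ (by fun_prop) h0
    fun t ht hlt => ?_
  exact nonpos_of_add_le_mul_of_lt_one (hD t ht.le) (hineq t ht.le)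
    (by rwa [← lt_div_iff₀' ha])

/-- Variant of the nonlinear Gronwall lemma: if
`(x² + y²)' + D ≤ a (x² + y² + √(2(x² + y²))) D` on `[0,∞)` with `x, y, D ≥ 0`, and
`x(0)² + y(0)² + √(2(x(0)² + y(0)²)) < 1/a`, then `t ↦ x(t)² + y(t)²` is
nonincreasing on `[0,∞)`. -/
theorem nonlinear_gronwall_monotone
    (a : ℝ) (ha : 0 < a) (x y D : ℝ → ℝ)
    (hx : ∀ t, 0 ≤ t → 0 ≤ x t) (hy : ∀ t, 0 ≤ t → 0 ≤ y t)
    (hD : ∀ t, 0 ≤ t → 0 ≤ D t)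
    (hx1 : ContDiffOn ℝ 1 x (Set.Ici 0)) (hy1 : ContDiffOn ℝ 1 y (Set.Ici 0))
    (hineq : ∀ t, 0 ≤ t →
      deriv (fun s => x s ^ 2 + y s ^ 2) t + D t ≤
        a * (x t ^ 2 + y t ^ 2 + Real.sqrt (2 * (x t ^ 2 + y t ^ 2))) * D t)
    (h0 : x 0 ^ 2 + y 0 ^ 2 + Real.sqrt (2 * (x 0 ^ 2 + y 0 ^ 2)) < 1 / a) :
    AntitoneOn (fun t => x t ^ 2 + y t ^ 2) (Set.Ici 0) :=
  nonlinear_gronwall_monotone_general a ha x y D hD hx1 hy1 hineq h0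
end

section
/- Let X : [0,T*) → [1,∞) be C¹ and A : [0,T*) → [0,∞) continuous, satisfying X'(t) ≤ C A(t) X(t) log(1 + X(t)) and A(t) ≤ C X(t) for all t < T*, for some constant C > 0. Then lim sup_{t→T*} X(t) = ∞ if and only if ∫₀^{T*} A(s) ds = ∞. -/
/-!
Since `X` is continuous on every `[0, t]`, `limsup_{t → T*} X = ∞` just says that `X` is unbounded
on `[0, T*)`. If `X ≤ M` there, then `A ≤ C M` on an interval of finite length, so `∫ A < ∞`.
Conversely, `log (log (1 + X))` has derivative `X' / ((1 + X) log (1 + X)) ≤ C A`, so it stays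
below `log (log (1 + X 0)) + C ∫ A`; a finite integral thus bounds `X` doubly exponentially.
-/

open MeasureTheory Set Filter Topology

lemma limsup_coe_lt_top_iff_isBoundedUnder {α : Type*} {l : Filter α} {u : α → ℝ} :
    limsup (fun x => (u x : EReal)) l < ⊤ ↔ IsBoundedUnder (· ≤ ·) l u := by
  constructor
  · intro h
    obtain ⟨r, hr, -⟩ := EReal.lt_iff_exists_real_btwn.1 h
    exact isBoundedUnder_of_eventually_le
      ((eventually_lt_of_limsup_lt hr).mono fun x hx => (EReal.coe_lt_coe_iff.1 hx).le)
  · rintro ⟨M, hM⟩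
    exact (limsup_le_of_le (by isBoundedDefault)
      (hM.mono fun x hx => EReal.coe_le_coe_iff.2 hx)).trans_lt (EReal.coe_lt_top M)

lemma isBoundedUnder_nhdsLT_iff_bddAbove_image {X : ℝ → ℝ} {a b : ℝ} (hab : a < b)
    (hX : ContinuousOn X (Ico a b)) :
    IsBoundedUnder (· ≤ ·) (𝓝[<] b) X ↔ BddAbove (X '' Ico a b) := by
  constructor
  · rintro ⟨M, hM⟩
    obtain ⟨l, hlb, hl⟩ := mem_nhdsLT_iff_exists_Ioo_subset.1 hM
    have hcover : Ico a b ⊆ Icc a (max a l) ∪ Ioo l b := fun t ht => by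
      rcases le_or_gt t (max a l) with h | h
      · exact Or.inl ⟨ht.1, h⟩
      · exact Or.inr ⟨(le_max_right a l).trans_lt h, ht.2⟩
    have hcompact : BddAbove (X '' Icc a (max a l)) :=
      isCompact_Icc.bddAbove_image
        (hX.mono fun t ht => ⟨ht.1, ht.2.trans_lt (max_lt hab hlb)⟩)
    have htail : BddAbove (X '' Ioo l b) := ⟨M, forall_mem_image.2 fun t ht => hl ht⟩
    exact (hcompact.union htail).mono (image_union X _ _ ▸ image_mono hcover)
  · rintro ⟨M, hM⟩
    exact isBoundedUnder_of_eventually_le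
      (eventually_of_mem (Ico_mem_nhdsLT hab) fun t ht => hM (mem_image_of_mem X ht))

lemma setLIntegral_ofReal_lt_top_of_bddAbove {α : Type*} [MeasurableSpace α] {μ : Measure α}
    {s : Set α} {f : α → ℝ} (hs : μ s ≠ ⊤) (hf : BddAbove (f '' s)) :
    ∫⁻ x in s, ENNReal.ofReal (f x) ∂μ < ⊤ := by
  obtain ⟨M, hM⟩ := hf
  exact setLIntegral_lt_top_of_le_nnreal hs
    ⟨M.toNNReal, fun x hx => ENNReal.ofReal_le_ofReal (hM (mem_image_of_mem f hx))⟩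

lemma div_one_add_div_log_le {d c x : ℝ} (hc : 0 ≤ c) (hx : 0 < x)
    (hd : d ≤ c * x * Real.log (1 + x)) : d / (1 + x) / Real.log (1 + x) ≤ c := by
  have hlog : 0 < Real.log (1 + x) := Real.log_pos (by linarith)
  rw [div_div, div_le_iff₀ (by positivity)]
  nlinarith [mul_nonneg hc hlog.le]

lemma intervalIntegral_le_toReal_setLIntegral {A : ℝ → ℝ} {s : Set ℝ} {a t : ℝ} (hat : a ≤ t)
    (hsub : Ioc a t ⊆ s) (hA0 : ∀ x ∈ Ioc a t, 0 ≤ A x)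
    (hAm : AEStronglyMeasurable A (volume.restrict (Ioc a t)))
    (hI : ∫⁻ x in s, ENNReal.ofReal (A x) ≠ ⊤) :
    ∫ x in a..t, A x ≤ (∫⁻ x in s, ENNReal.ofReal (A x)).toReal := by
  rw [intervalIntegral.integral_of_le hat,
    integral_eq_lintegral_of_nonneg_ae (ae_restrict_of_forall_mem measurableSet_Ioc hA0) hAm]
  exact ENNReal.toReal_mono hI (lintegral_mono_set hsub)

lemma log_log_one_add_le_add_integral {X X' A : ℝ → ℝ} {a t : ℝ} (hat : a ≤ t)
    (hXpos : ∀ s ∈ Icc a t, 0 < X s) (hXc : ContinuousOn X (Icc a t))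
    (hXd : ∀ s ∈ Ioo a t, HasDerivAt X (X' s) s)
    (hA0 : ∀ s ∈ Ioo a t, 0 ≤ A s) (hAi : IntegrableOn A (Icc a t))
    (hineq : ∀ s ∈ Ioo a t, X' s ≤ A s * X s * Real.log (1 + X s)) :
    Real.log (Real.log (1 + X t)) ≤ Real.log (Real.log (1 + X a)) + ∫ s in a..t, A s := by
  have hlog_pos : ∀ s ∈ Icc a t, 0 < Real.log (1 + X s) := fun s hs =>
    Real.log_pos (by linarith [hXpos s hs])
  have hone_add_pos : ∀ s ∈ Icc a t, 0 < 1 + X s := fun s hs => by linarith [hXpos s hs]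
  have hcont : ContinuousOn (fun s => Real.log (Real.log (1 + X s))) (Icc a t) :=
    ((continuousOn_const.add hXc).log fun s hs => (hone_add_pos s hs).ne').log
      fun s hs => (hlog_pos s hs).ne'
  have hderiv : ∀ s ∈ Ioo a t, HasDerivWithinAt (fun s => Real.log (Real.log (1 + X s)))
      (X' s / (1 + X s) / Real.log (1 + X s)) (Ioi s) s := fun s hs =>
    ((((hXd s hs).const_add 1).log (hone_add_pos s (Ioo_subset_Icc_self hs)).ne').log
      (hlog_pos s (Ioo_subset_Icc_self hs)).ne').hasDerivWithinAt
  have := intervalIntegral.sub_le_integral_of_hasDeriv_right_of_le hat hcont hderiv hAi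
    fun s hs => div_one_add_div_log_le (hA0 s hs) (hXpos s (Ioo_subset_Icc_self hs)) (hineq s hs)
  linarith

lemma bddAbove_image_of_setLIntegral_ne_top {X A : ℝ → ℝ} {a b C : ℝ} (hC : 0 ≤ C)
    (hXpos : ∀ t ∈ Ico a b, 0 < X t) (hA0 : ∀ t ∈ Ico a b, 0 ≤ A t)
    (hAc : ContinuousOn A (Ico a b)) (hXd : DifferentiableOn ℝ X (Ico a b))
    (hineq : ∀ t ∈ Ico a b, deriv X t ≤ C * A t * X t * Real.log (1 + X t))
    (hI : ∫⁻ s in Ico a b, ENNReal.ofReal (A s) ≠ ⊤) :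
    BddAbove (X '' Ico a b) := by
  set I := (∫⁻ s in Ico a b, ENNReal.ofReal (A s)).toReal
  set K := Real.log (Real.log (1 + X a)) + C * I
  refine ⟨Real.exp (Real.exp K), forall_mem_image.2 fun t ht => ?_⟩
  have hsub : Icc a t ⊆ Ico a b := Icc_subset_Ico_right ht.2
  have hgrowth := log_log_one_add_le_add_integral (A := fun s => C * A s) ht.1
    (fun s hs => hXpos s (hsub hs)) (hXd.continuousOn.mono hsub)
    (fun s hs => ((hXd s (hsub (Ioo_subset_Icc_self hs))).differentiableAt
      (Ico_mem_nhds hs.1 (hs.2.trans ht.2))).hasDerivAt)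
    (fun s hs => mul_nonneg hC (hA0 s (hsub (Ioo_subset_Icc_self hs))))
    (((hAc.mono hsub).integrableOn_compact isCompact_Icc).const_mul C)
    (fun s hs => hineq s (hsub (Ioo_subset_Icc_self hs)))
  have hintegral : ∫ s in a..t, C * A s ≤ C * I := by
    rw [intervalIntegral.integral_const_mul]
    refine mul_le_mul_of_nonneg_left (intervalIntegral_le_toReal_setLIntegral ht.1
      (Ioc_subset_Icc_self.trans hsub) (fun s hs => hA0 s (hsub (Ioc_subset_Icc_self hs)))
      ((hAc.mono (Ioc_subset_Icc_self.trans hsub)).aestronglyMeasurable measurableSet_Ioc) hI) hC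
  have hone_add_pos : 0 < 1 + X t := by linarith [hXpos t ht]
  have hloglog : Real.log (Real.log (1 + X t)) ≤ K := hgrowth.trans (by linarith)
  have hlog : Real.log (1 + X t) ≤ Real.exp K :=
    (Real.log_le_iff_le_exp (Real.log_pos (by linarith [hXpos t ht]))).1 hloglog
  linarith [(Real.log_le_iff_le_exp hone_add_pos).1 hlog]

/-- Abstract blow-up criterion equivalence: if `X ≥ 1` is `C¹` on `[0, T*)`, `A ≥ 0` is
continuous, `X' ≤ C A X log(1 + X)` and `A ≤ C X`, then
`limsup_{t→T*} X(t) = ∞` if and only if `∫₀^{T*} A(s) ds = ∞`. -/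
theorem blowup_criterion_equivalence
    (Tstar C : ℝ) (hT : 0 < Tstar) (hC : 0 < C) (X A : ℝ → ℝ)
    (hX1 : ∀ t ∈ Set.Ico (0:ℝ) Tstar, 1 ≤ X t)
    (hA0 : ∀ t ∈ Set.Ico (0:ℝ) Tstar, 0 ≤ A t)
    (hAc : ContinuousOn A (Set.Ico 0 Tstar))
    (hXd : ContDiffOn ℝ 1 X (Set.Ico 0 Tstar))
    (hineq : ∀ t ∈ Set.Ico (0:ℝ) Tstar,
      deriv X t ≤ C * A t * X t * Real.log (1 + X t))
    (hAX : ∀ t ∈ Set.Ico (0:ℝ) Tstar, A t ≤ C * X t) :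
    (Filter.limsup (fun t => ((X t : ℝ) : EReal)) (nhdsWithin Tstar (Set.Iio Tstar)) = ⊤)
      ↔ (∫⁻ s in Set.Ico (0:ℝ) Tstar, ENNReal.ofReal (A s) = ⊤) := by
  rw [← not_lt_top_iff, limsup_coe_lt_top_iff_isBoundedUnder,
    isBoundedUnder_nhdsLT_iff_bddAbove_image hT hXd.continuousOn, ← not_lt_top_iff]
  refine not_congr ⟨fun ⟨M, hM⟩ => ?_, fun hI => ?_⟩
  · refine setLIntegral_ofReal_lt_top_of_bddAbove (by simp [Real.volume_Ico])
      ⟨C * M, forall_mem_image.2 fun t ht => (hAX t ht).trans ?_⟩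
    exact mul_le_mul_of_nonneg_left (hM (mem_image_of_mem X ht)) hC.le
  · exact bddAbove_image_of_setLIntegral_ne_top hC.le (fun t ht => one_pos.trans_le (hX1 t ht))
      hA0 hAc (hXd.differentiableOn one_ne_zero) hineq hI.ne
end

section
/- Let B ∈ L^∞(ℝ³) with ∇B ∈ L²(ℝ³) (so B ∈ L⁶ by Sobolev embedding after subtracting constants, assume additionally B ∈ L⁶), and σ_R the standard cutoff at scale R. Then |∫_{ℝ³} ((∇ × B) × B) · (∇σ_R × B) dx| ≤ C ‖B‖_{L^∞} ‖∇B‖_{L²} ‖B‖_{L⁶({R ≤ |x| ≤ 2R})}, and this tends to 0 as R → ∞. -/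
open MeasureTheory
open scoped ENNReal NNReal

/-- Partial derivative `∂ᵢ f` of a scalar function on `ℝ³`. -/
noncomputable def pd (i : Fin 3) (f : (Fin 3 → ℝ) → ℝ) : (Fin 3 → ℝ) → ℝ :=
  fun x => fderiv ℝ f x (Pi.single i 1)

/-- Cross product in `ℝ³`. -/
def cross (a b : Fin 3 → ℝ) : Fin 3 → ℝ :=
  ![a 1 * b 2 - a 2 * b 1, a 2 * b 0 - a 0 * b 2, a 0 * b 1 - a 1 * b 0]

/-- Euclidean dot product in `ℝ³`. -/
def dot (a b : Fin 3 → ℝ) : ℝ := ∑ i, a i * b i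

/-- Curl `∇ × B` of a vector field on `ℝ³`. -/
noncomputable def curl (B : (Fin 3 → ℝ) → (Fin 3 → ℝ)) (x : Fin 3 → ℝ) : Fin 3 → ℝ :=
  ![pd 1 (fun y => B y 2) x - pd 2 (fun y => B y 1) x,
    pd 2 (fun y => B y 0) x - pd 0 (fun y => B y 2) x,
    pd 0 (fun y => B y 1) x - pd 1 (fun y => B y 0) x]

lemma aux_prod {x y z w X Y : ℝ} (hx : |x| ≤ X) (hy : |y| ≤ Y) (hz : |z| ≤ X) (hw : |w| ≤ Y) :
    |x * y - z * w| ≤ 2 * (X * Y) := by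
  have h1 : |x * y| ≤ X * Y := by
    rw [abs_mul]; exact mul_le_mul hx hy (abs_nonneg _) ((abs_nonneg x).trans hx)
  have h2 : |z * w| ≤ X * Y := by
    rw [abs_mul]; exact mul_le_mul hz hw (abs_nonneg _) ((abs_nonneg z).trans hz)
  calc |x * y - z * w| ≤ |x * y| + |z * w| := abs_sub _ _
    _ ≤ 2 * (X * Y) := by linarith

lemma abs_cross_apply_le (a b : Fin 3 → ℝ) (i : Fin 3) : |cross a b i| ≤ 2 * (‖a‖ * ‖b‖) := by
  have ha : ∀ j, |a j| ≤ ‖a‖ := fun j => by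
    simpa [Real.norm_eq_abs] using norm_le_pi_norm a j
  have hb : ∀ j, |b j| ≤ ‖b‖ := fun j => by
    simpa [Real.norm_eq_abs] using norm_le_pi_norm b j
  fin_cases i <;> simp only [cross, Matrix.cons_val_zero, Matrix.cons_val_one, Matrix.head_cons,
    Matrix.cons_val_two, Matrix.tail_cons] <;>
    exact aux_prod (ha _) (hb _) (ha _) (hb _)

lemma abs_dot_cross_le (a b c d : Fin 3 → ℝ) :
    |dot (cross a b) (cross c d)| ≤ 12 * (‖a‖ * ‖b‖) * (‖c‖ * ‖d‖) := by
  have h : |dot (cross a b) (cross c d)| ≤ ∑ i, |cross a b i * cross c d i| :=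
    Finset.abs_sum_le_sum_abs _ _
  have h2 : ∀ i : Fin 3, |cross a b i * cross c d i| ≤ (2 * (‖a‖ * ‖b‖)) * (2 * (‖c‖ * ‖d‖)) := by
    intro i
    rw [abs_mul]
    exact mul_le_mul (abs_cross_apply_le a b i) (abs_cross_apply_le c d i) (abs_nonneg _)
      (by positivity)
  calc |dot (cross a b) (cross c d)| ≤ ∑ i : Fin 3, |cross a b i * cross c d i| := h
    _ ≤ ∑ _i : Fin 3, (2 * (‖a‖ * ‖b‖)) * (2 * (‖c‖ * ‖d‖)) := Finset.sum_le_sum fun i _ => h2 i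
    _ = 12 * (‖a‖ * ‖b‖) * (‖c‖ * ‖d‖) := by simp [Finset.sum_const]; ring

lemma pd_scaled {σ : (Fin 3 → ℝ) → ℝ} (hσ : ContDiff ℝ (⊤ : ℕ∞) σ) {R : ℝ}
    (x : Fin 3 → ℝ) (i : Fin 3) :
    pd i (fun y => σ (R⁻¹ • y)) x = R⁻¹ * (fderiv ℝ σ (R⁻¹ • x)) (Pi.single i 1) := by
  have hL : HasFDerivAt (fun y : Fin 3 → ℝ => R⁻¹ • y)
      (R⁻¹ • ContinuousLinearMap.id ℝ (Fin 3 → ℝ)) x :=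
    (ContinuousLinearMap.id ℝ (Fin 3 → ℝ)).hasFDerivAt.const_smul R⁻¹
  have hσ' : HasFDerivAt σ (fderiv ℝ σ (R⁻¹ • x)) (R⁻¹ • x) :=
    (hσ.differentiable (by simp) (R⁻¹ • x)).hasFDerivAt
  have hc : HasFDerivAt (fun y : Fin 3 → ℝ => σ (R⁻¹ • y))
      ((fderiv ℝ σ (R⁻¹ • x)).comp (R⁻¹ • ContinuousLinearMap.id ℝ (Fin 3 → ℝ))) x :=
    hσ'.comp x hL
  rw [pd, hc.fderiv]
  simp [_root_.map_smul, smul_eq_mul]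

lemma pd_scaled_zero_of_lt {σ : (Fin 3 → ℝ) → ℝ} (hσ1 : ∀ x, ‖x‖ ≤ 1 → σ x = 1)
    {R : ℝ} (hR : 0 < R) {x : Fin 3 → ℝ} (hx : ‖x‖ < R) (i : Fin 3) :
    pd i (fun y => σ (R⁻¹ • y)) x = 0 := by
  have hev : (fun y : Fin 3 → ℝ => σ (R⁻¹ • y)) =ᶠ[nhds x] fun _ => (1 : ℝ) := by
    have hball : Metric.ball x (R - ‖x‖) ∈ nhds x := Metric.ball_mem_nhds x (by linarith)
    filter_upwards [hball] with y hy
    have hyx : ‖y - x‖ < R - ‖x‖ := by simpa [dist_eq_norm] using hy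
    have hyn : ‖y‖ < R := by
      calc ‖y‖ ≤ ‖y - x‖ + ‖x‖ := by simpa using norm_add_le (y - x) x
        _ < R := by linarith
    apply hσ1
    rw [norm_smul, norm_inv, Real.norm_eq_abs, abs_of_pos hR]
    rw [inv_mul_le_iff₀ hR]
    linarith
  rw [pd, Filter.EventuallyEq.fderiv_eq hev]
  simp

lemma pd_scaled_zero_of_gt {σ : (Fin 3 → ℝ) → ℝ} (hσ0 : ∀ x, 2 < ‖x‖ → σ x = 0)
    {R : ℝ} (hR : 0 < R) {x : Fin 3 → ℝ} (hx : 2 * R < ‖x‖) (i : Fin 3) :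
    pd i (fun y => σ (R⁻¹ • y)) x = 0 := by
  have hev : (fun y : Fin 3 → ℝ => σ (R⁻¹ • y)) =ᶠ[nhds x] fun _ => (0 : ℝ) := by
    have hball : Metric.ball x (‖x‖ - 2 * R) ∈ nhds x := Metric.ball_mem_nhds x (by linarith)
    filter_upwards [hball] with y hy
    have hyx : ‖x - y‖ < ‖x‖ - 2 * R := by
      simpa [dist_eq_norm, norm_sub_rev] using hy
    have hyn : 2 * R < ‖y‖ := by
      have : ‖x‖ ≤ ‖x - y‖ + ‖y‖ := by simpa using norm_add_le (x - y) y
      linarith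
    apply hσ0
    rw [norm_smul, norm_inv, Real.norm_eq_abs, abs_of_pos hR]
    rw [lt_inv_mul_iff₀ hR]
    linarith
  rw [pd, Filter.EventuallyEq.fderiv_eq hev]
  simp

/-- Cutoff estimate for the term `I₄` in the Liouville theorem:
`|∫ ((∇×B)×B)·(∇σ_R×B)| ≤ C ‖B‖_{L^∞} ‖∇B‖_{L²} ‖B‖_{L⁶(R ≤ |x| ≤ 2R)}`
with `C` independent of `R`, and the left-hand side tends to `0` as `R → ∞`. -/
theorem cutoff_estimate_I4
    (σ : (Fin 3 → ℝ) → ℝ) (hσ : ContDiff ℝ (⊤ : ℕ∞) σ) (hσc : HasCompactSupport σ)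
    (hσ01 : ∀ x, 0 ≤ σ x ∧ σ x ≤ 1)
    (hσ1 : ∀ x, ‖x‖ ≤ 1 → σ x = 1)
    (hσ0 : ∀ x, 2 < ‖x‖ → σ x = 0) :
    ∃ C > 0, ∀ B : (Fin 3 → ℝ) → (Fin 3 → ℝ), ContDiff ℝ 1 B →
      MemLp B ⊤ volume →
      Integrable (fun x : Fin 3 → ℝ => ∑ i, ∑ j, (pd j (fun y => B y i) x) ^ 2) →
      MemLp B 6 volume →
      (∀ R ≥ (1:ℝ),
        |∫ x : Fin 3 → ℝ,
            dot (cross (curl B x) (B x))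
              (cross (fun i => pd i (fun y => σ (R⁻¹ • y)) x) (B x))| ≤
          C * (eLpNorm B ⊤ volume).toReal
            * Real.sqrt (∫ x : Fin 3 → ℝ, ∑ i, ∑ j, (pd j (fun y => B y i) x) ^ 2)
            * (∫ x in {x : Fin 3 → ℝ | R ≤ ‖x‖ ∧ ‖x‖ ≤ 2 * R},
                ‖B x‖ ^ (6:ℕ)) ^ ((1:ℝ)/6)) ∧
      Filter.Tendsto (fun R : ℝ =>
          ∫ x : Fin 3 → ℝ,
            dot (cross (curl B x) (B x))
              (cross (fun i => pd i (fun y => σ (R⁻¹ • y)) x) (B x)))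
        Filter.atTop (nhds 0) := by
  -- bound on the gradient of σ
  obtain ⟨M₀, hM₀⟩ := (hσc.fderiv (𝕜 := ℝ)).exists_bound_of_continuous (hσ.continuous_fderiv (by simp))
  set M : ℝ := max M₀ 1 with hMdef
  have hM1 : (1:ℝ) ≤ M := le_max_right _ _
  have hM0 : (0:ℝ) < M := lt_of_lt_of_le one_pos hM1
  have hMb : ∀ x, ‖fderiv ℝ σ x‖ ≤ M := fun x => (hM₀ x).trans (le_max_left _ _)
  refine ⟨96 * M, by positivity, ?_⟩
  intro B hB hBinf hBgrad hB6
  set L : ℝ := (eLpNorm B ⊤ volume).toReal with hLdef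
  have hL0 : 0 ≤ L := ENNReal.toReal_nonneg
  set S : (Fin 3 → ℝ) → ℝ := fun x => ∑ i, ∑ j, (pd j (fun y => B y i) x) ^ 2 with hSdef
  have hSnn : ∀ x, 0 ≤ S x := fun x => by positivity
  set D : (Fin 3 → ℝ) → ℝ := fun x => Real.sqrt (S x) with hDdef
  have hDnn : ∀ x, 0 ≤ D x := fun x => Real.sqrt_nonneg _
  -- measurability
  have hSmeas : Measurable S := by
    apply Finset.measurable_sum
    intro i _
    apply Finset.measurable_sum
    intro j _
    exact ((measurable_fderiv_apply_const ℝ (f := fun y : Fin 3 → ℝ => B y i)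
      (Pi.single j (1:ℝ))).pow_const 2)
  have hDmeas : Measurable D := hSmeas.sqrt
  have hBcont : Continuous B := hB.continuous
  -- pointwise bounds
  have hpdS : ∀ (i j : Fin 3) (x : Fin 3 → ℝ), |pd j (fun y => B y i) x| ≤ D x := by
    intro i j x
    apply Real.abs_le_sqrt
    calc (pd j (fun y => B y i) x) ^ 2 ≤ ∑ j', (pd j' (fun y => B y i) x) ^ 2 :=
          Finset.single_le_sum (f := fun j' => (pd j' (fun y => B y i) x) ^ 2)
            (fun _ _ => sq_nonneg _) (Finset.mem_univ j)
      _ ≤ S x := Finset.single_le_sum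
          (f := fun i' => ∑ j', (pd j' (fun y => B y i') x) ^ 2)
          (fun _ _ => by positivity) (Finset.mem_univ i)
  have hcurl : ∀ x, ‖curl B x‖ ≤ 2 * D x := by
    intro x
    rw [pi_norm_le_iff_of_nonneg (by positivity)]
    intro i
    rw [Real.norm_eq_abs]
    fin_cases i <;>
      simp only [curl, Matrix.cons_val_zero, Matrix.cons_val_one, Matrix.head_cons,
        Matrix.cons_val_two, Matrix.tail_cons] <;>
      calc |_ - _| ≤ |_| + |_| := abs_sub _ _
        _ ≤ 2 * D x := by
            have := hpdS; nlinarith [hpdS 2 1 x, hpdS 1 2 x, hpdS 0 2 x, hpdS 2 0 x,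
              hpdS 1 0 x, hpdS 0 1 x]
  have hBL : ∀ᵐ x : Fin 3 → ℝ, ‖B x‖ ≤ L := by
    filter_upwards [ae_le_eLpNormEssSup (f := B) (μ := volume)] with x hx
    have h1 : (‖B x‖₊ : ℝ≥0∞) ≤ eLpNorm B ⊤ volume := by
      rwa [eLpNorm_exponent_top]
    calc ‖B x‖ = ((‖B x‖₊ : ℝ≥0∞)).toReal := by simp
      _ ≤ L := ENNReal.toReal_mono hBinf.2.ne h1
  -- the integral of |B|^6 over the tail
  have h6int : Integrable (fun x : Fin 3 → ℝ => ‖B x‖ ^ (6:ℕ)) := by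
    have := hB6.integrable_norm_rpow (by norm_num) (by norm_num)
    have heq : (fun x : Fin 3 → ℝ => ‖B x‖ ^ (6 : ℝ≥0∞).toReal)
        = fun x => ‖B x‖ ^ (6:ℕ) := by
      ext x
      rw [show ((6 : ℝ≥0∞).toReal) = ((6:ℕ):ℝ) by simp, Real.rpow_natCast]
    rwa [heq] at this
  -- MAIN ESTIMATE
  have key : ∀ R ≥ (1:ℝ),
      |∫ x : Fin 3 → ℝ, dot (cross (curl B x) (B x))
          (cross (fun i => pd i (fun y => σ (R⁻¹ • y)) x) (B x))| ≤
        96 * M * L * Real.sqrt (∫ x : Fin 3 → ℝ, S x)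
          * (∫ x in {x : Fin 3 → ℝ | R ≤ ‖x‖ ∧ ‖x‖ ≤ 2 * R}, ‖B x‖ ^ (6:ℕ)) ^ ((1:ℝ)/6) := by
    intro R hR
    have hR0 : (0:ℝ) < R := lt_of_lt_of_le one_pos hR
    have hRne : R ≠ 0 := hR0.ne'
    set A : Set (Fin 3 → ℝ) := {x | R ≤ ‖x‖ ∧ ‖x‖ ≤ 2 * R} with hAdef
    have hAclosed : IsClosed A :=
      (isClosed_le continuous_const continuous_norm).inter
        (isClosed_le continuous_norm continuous_const)
    have hAmeas : MeasurableSet A := hAclosed.measurableSet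
    set g : (Fin 3 → ℝ) → (Fin 3 → ℝ) := fun x => fun i => pd i (fun y => σ (R⁻¹ • y)) x
      with hgdef
    have hgnorm : ∀ x, ‖g x‖ ≤ M * R⁻¹ := by
      intro x
      rw [pi_norm_le_iff_of_nonneg (by positivity)]
      intro i
      rw [Real.norm_eq_abs, hgdef]
      simp only
      rw [pd_scaled hσ x i, abs_mul, abs_inv, abs_of_pos hR0]
      have h1 : |(fderiv ℝ σ (R⁻¹ • x)) (Pi.single i 1)| ≤ M := by
        have := (fderiv ℝ σ (R⁻¹ • x)).le_opNorm (Pi.single i 1 : Fin 3 → ℝ)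
        have hsn : ‖(Pi.single i 1 : Fin 3 → ℝ)‖ ≤ 1 := by
          rw [pi_norm_le_iff_of_nonneg (by norm_num)]
          intro j
          rcases eq_or_ne j i with rfl | hji
          · simp
          · simp [Pi.single_eq_of_ne hji]
        calc |(fderiv ℝ σ (R⁻¹ • x)) (Pi.single i 1)|
            ≤ ‖fderiv ℝ σ (R⁻¹ • x)‖ * ‖(Pi.single i 1 : Fin 3 → ℝ)‖ := this
          _ ≤ M * 1 :=
            mul_le_mul (hMb _) hsn (norm_nonneg _) hM0.le
          _ = M := mul_one M
      calc R⁻¹ * |(fderiv ℝ σ (R⁻¹ • x)) (Pi.single i 1)| ≤ R⁻¹ * M := by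
            exact mul_le_mul_of_nonneg_left h1 (by positivity)
        _ = M * R⁻¹ := mul_comm _ _
    have hgzero : ∀ x, x ∉ A → g x = 0 := by
      intro x hx
      have : ‖x‖ < R ∨ 2 * R < ‖x‖ := by
        rcases lt_or_ge ‖x‖ R with h | h
        · exact Or.inl h
        · rcases le_or_gt ‖x‖ (2*R) with h2 | h2
          · exact absurd ⟨h, h2⟩ hx
          · exact Or.inr h2
      funext i
      rcases this with h | h
      · exact pd_scaled_zero_of_lt hσ1 hR0 h i
      · exact pd_scaled_zero_of_gt hσ0 hR0 h i
    set f : (Fin 3 → ℝ) → ℝ := fun x => dot (cross (curl B x) (B x)) (cross (g x) (B x))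
      with hfdef
    set c : ℝ := 24 * M * L * R⁻¹ with hcdef
    have hc0 : 0 ≤ c := by positivity
    set ind : (Fin 3 → ℝ) → ℝ := A.indicator fun y => ‖B y‖ with hinddef
    -- a.e. pointwise bound
    have hpt : ∀ᵐ x : Fin 3 → ℝ,
        ENNReal.ofReal ‖f x‖ ≤ ENNReal.ofReal (c * (D x * ind x)) := by
      filter_upwards [hBL] with x hxL
      apply ENNReal.ofReal_le_ofReal
      by_cases hxA : x ∈ A
      · rw [hinddef, Set.indicator_of_mem hxA]
        rw [Real.norm_eq_abs, hfdef]
        calc |dot (cross (curl B x) (B x)) (cross (g x) (B x))|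
            ≤ 12 * (‖curl B x‖ * ‖B x‖) * (‖g x‖ * ‖B x‖) := abs_dot_cross_le _ _ _ _
          _ ≤ 12 * ((2 * D x) * L) * ((M * R⁻¹) * ‖B x‖) := by
              apply mul_le_mul
              · apply mul_le_mul_of_nonneg_left _ (by norm_num)
                exact mul_le_mul (hcurl x) hxL (norm_nonneg _)
                  (by positivity)
              · exact mul_le_mul_of_nonneg_right (hgnorm x) (norm_nonneg _)
              · positivity
              · positivity
          _ = c * (D x * ‖B x‖) := by rw [hcdef]; ring
      · rw [hinddef, Set.indicator_of_notMem hxA]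
        have : f x = 0 := by
          rw [hfdef]
          simp only [hgzero x hxA]
          simp [dot, cross, Fin.sum_univ_three]
        rw [this, norm_zero]
        positivity
    -- ennreal-valued factors
    set F1 : (Fin 3 → ℝ) → ℝ≥0∞ := fun x => ENNReal.ofReal (D x) with hF1def
    set F2 : (Fin 3 → ℝ) → ℝ≥0∞ := fun x => ENNReal.ofReal (ind x) with hF2def
    have hF1meas : AEMeasurable F1 := (hDmeas.ennreal_ofReal).aemeasurable
    have hF2meas : AEMeasurable F2 := by
      apply Measurable.aemeasurable
      apply Measurable.ennreal_ofReal
      exact (hBcont.norm.measurable).indicator hAmeas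
    -- step 1 : reduce to lintegral of F1 * F2
    have step1 : (∫⁻ x, ENNReal.ofReal ‖f x‖) ≤
        ENNReal.ofReal c * ∫⁻ x, (F1 * F2) x := by
      calc (∫⁻ x, ENNReal.ofReal ‖f x‖) ≤ ∫⁻ x, ENNReal.ofReal (c * (D x * ind x)) :=
            lintegral_mono_ae hpt
        _ = ∫⁻ x, ENNReal.ofReal c * (F1 x * F2 x) := by
            apply lintegral_congr
            intro x
            rw [ENNReal.ofReal_mul hc0, ENNReal.ofReal_mul (hDnn x)]
        _ = ENNReal.ofReal c * ∫⁻ x, (F1 * F2) x := by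
            rw [← lintegral_const_mul' _ _ ENNReal.ofReal_ne_top]
            simp [Pi.mul_apply]
    -- step 2 : Cauchy-Schwarz
    have step2 : (∫⁻ x, (F1 * F2) x) ≤
        (∫⁻ x, F1 x ^ (2:ℝ)) ^ ((1:ℝ)/2) * (∫⁻ x, F2 x ^ (2:ℝ)) ^ ((1:ℝ)/2) :=
      ENNReal.lintegral_mul_le_Lp_mul_Lq volume ⟨by norm_num, by norm_num, by norm_num⟩ hF1meas hF2meas
    -- step 3 : first factor is √(∫ S)
    have step3 : (∫⁻ x, F1 x ^ (2:ℝ)) ^ ((1:ℝ)/2)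
        = ENNReal.ofReal (Real.sqrt (∫ x : Fin 3 → ℝ, S x)) := by
      have h1 : ∀ x : Fin 3 → ℝ, F1 x ^ (2:ℝ) = ENNReal.ofReal (S x) := by
        intro x
        rw [hF1def]
        rw [ENNReal.ofReal_rpow_of_nonneg (hDnn x) (by norm_num)]
        congr 1
        rw [hDdef]
        rw [show ((2:ℝ)) = ((2:ℕ):ℝ) by norm_num, Real.rpow_natCast]
        exact Real.sq_sqrt (hSnn x)
      rw [lintegral_congr h1]
      rw [← ofReal_integral_eq_lintegral_ofReal hBgrad (Filter.Eventually.of_forall hSnn)]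
      rw [ENNReal.ofReal_rpow_of_nonneg (integral_nonneg hSnn) (by norm_num)]
      congr 1
      rw [Real.sqrt_eq_rpow]
    -- step 5 : second factor reduces to set-lintegral over A
    have step5 : (∫⁻ x, F2 x ^ (2:ℝ))
        = ∫⁻ x in A, (ENNReal.ofReal ‖B x‖) ^ (2:ℝ) := by
      rw [← lintegral_indicator hAmeas]
      apply lintegral_congr
      intro x
      by_cases hxA : x ∈ A
      · rw [hF2def, Set.indicator_of_mem hxA]
        simp only [hinddef, Set.indicator_of_mem hxA]
      · rw [hF2def]
        simp only [hinddef, Set.indicator_of_notMem hxA]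
        simp [Set.indicator_of_notMem hxA]
    -- step 6 : Hölder on A with exponents 3, 3/2
    have step6 : (∫⁻ x in A, (ENNReal.ofReal ‖B x‖) ^ (2:ℝ)) ≤
        (∫⁻ x in A, (ENNReal.ofReal ‖B x‖) ^ (6:ℝ)) ^ ((1:ℝ)/3) * (volume A) ^ ((2:ℝ)/3) := by
      have hmeas : AEMeasurable (fun x => (ENNReal.ofReal ‖B x‖) ^ (2:ℝ)) (volume.restrict A) :=
        ((hBcont.norm.measurable.ennreal_ofReal).pow_const _).aemeasurable
      have h := ENNReal.lintegral_mul_le_Lp_mul_Lq (volume.restrict A)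
        (p := 3) (q := 3/2) ⟨by norm_num, by norm_num, by norm_num⟩ hmeas aemeasurable_const
        (f := fun x => (ENNReal.ofReal ‖B x‖) ^ (2:ℝ)) (g := fun _ => 1)
      simp only [Pi.mul_apply, mul_one, ENNReal.one_rpow] at h
      calc (∫⁻ x in A, (ENNReal.ofReal ‖B x‖) ^ (2:ℝ))
          ≤ (∫⁻ x in A, ((ENNReal.ofReal ‖B x‖) ^ (2:ℝ)) ^ (3:ℝ)) ^ ((1:ℝ)/3)
            * (∫⁻ _x in A, (1:ℝ≥0∞)) ^ ((1:ℝ)/(3/2)) := by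
            convert h using 2 <;> norm_num
        _ = (∫⁻ x in A, (ENNReal.ofReal ‖B x‖) ^ (6:ℝ)) ^ ((1:ℝ)/3) * (volume A) ^ ((2:ℝ)/3) := by
            congr 1
            · congr 1
              apply lintegral_congr
              intro x
              rw [← ENNReal.rpow_mul]
              norm_num
            · rw [setLIntegral_one]
              norm_num
    -- step 7 : identification of the L⁶ integral
    have step7 : (∫⁻ x in A, (ENNReal.ofReal ‖B x‖) ^ (6:ℝ))
        = ENNReal.ofReal (∫ x in A, ‖B x‖ ^ (6:ℕ)) := by
      rw [ofReal_integral_eq_lintegral_ofReal (h6int.integrableOn)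
        (Filter.Eventually.of_forall (fun x => by positivity))]
      apply lintegral_congr
      intro x
      rw [ENNReal.ofReal_pow (norm_nonneg _), ← ENNReal.rpow_natCast]
      norm_num
    -- step 8 : measure of the annulus
    have step8 : (volume A) ^ ((2:ℝ)/3) ≤ (ENNReal.ofReal ((4*R) ^ (3:ℕ))) ^ ((2:ℝ)/3) := by
      apply ENNReal.rpow_le_rpow _ (by norm_num)
      calc volume A ≤ volume (Metric.closedBall (0 : Fin 3 → ℝ) (2*R)) := by
            apply measure_mono
            intro x hx
            rw [Metric.mem_closedBall, dist_zero_right]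
            exact hx.2
        _ = ENNReal.ofReal ((4*R) ^ (3:ℕ)) := by
            rw [Real.volume_pi_closedBall 0 (by positivity)]
            norm_num
            ring_nf
    have step8' : (ENNReal.ofReal ((4*R) ^ (3:ℕ))) ^ ((2:ℝ)/3) = ENNReal.ofReal ((4*R)^(2:ℕ)) := by
      rw [ENNReal.ofReal_rpow_of_nonneg (by positivity) (by norm_num)]
      congr 1
      rw [← Real.rpow_natCast (4*R) 3, ← Real.rpow_mul (by positivity)]
      rw [← Real.rpow_natCast (4*R) 2]
      norm_num
    -- assemble the second factor
    set I6 : ℝ := ∫ x in A, ‖B x‖ ^ (6:ℕ) with hI6def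
    have hI6nn : 0 ≤ I6 := integral_nonneg (fun x => by positivity)
    have hfactor2 : (∫⁻ x, F2 x ^ (2:ℝ)) ^ ((1:ℝ)/2) ≤
        ENNReal.ofReal (I6 ^ ((1:ℝ)/6) * (4*R)) := by
      calc (∫⁻ x, F2 x ^ (2:ℝ)) ^ ((1:ℝ)/2)
          ≤ ((ENNReal.ofReal I6) ^ ((1:ℝ)/3) * (ENNReal.ofReal ((4*R)^(2:ℕ)))) ^ ((1:ℝ)/2) := by
            apply ENNReal.rpow_le_rpow _ (by norm_num)
            rw [step5]
            calc (∫⁻ x in A, (ENNReal.ofReal ‖B x‖) ^ (2:ℝ))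
                ≤ (∫⁻ x in A, (ENNReal.ofReal ‖B x‖) ^ (6:ℝ)) ^ ((1:ℝ)/3)
                  * (volume A) ^ ((2:ℝ)/3) := step6
              _ ≤ (ENNReal.ofReal I6) ^ ((1:ℝ)/3) * ENNReal.ofReal ((4*R)^(2:ℕ)) := by
                  rw [step7]
                  exact mul_le_mul_right (step8.trans_eq step8') _
        _ = ENNReal.ofReal (I6 ^ ((1:ℝ)/6) * (4*R)) := by
            rw [ENNReal.mul_rpow_of_nonneg _ _ (by norm_num)]
            rw [← ENNReal.rpow_mul]
            rw [ENNReal.ofReal_rpow_of_nonneg hI6nn (by norm_num : (0:ℝ) ≤ 1/3 * (1/2))]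
            rw [ENNReal.ofReal_rpow_of_nonneg (by positivity) (by norm_num : (0:ℝ) ≤ 1/2)]
            rw [ENNReal.ofReal_mul (by positivity)]
            congr 2
            · norm_num
            · rw [← Real.rpow_natCast (4*R) 2, ← Real.rpow_mul (by positivity)]
              norm_num
    -- put everything together in ℝ≥0∞
    have hENN : (∫⁻ x, ENNReal.ofReal ‖f x‖) ≤
        ENNReal.ofReal (96 * M * L * Real.sqrt (∫ x : Fin 3 → ℝ, S x) * I6 ^ ((1:ℝ)/6)) := by
      calc (∫⁻ x, ENNReal.ofReal ‖f x‖) ≤ ENNReal.ofReal c * ∫⁻ x, (F1 * F2) x := step1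
        _ ≤ ENNReal.ofReal c *
            ((∫⁻ x, F1 x ^ (2:ℝ)) ^ ((1:ℝ)/2) * (∫⁻ x, F2 x ^ (2:ℝ)) ^ ((1:ℝ)/2)) :=
            mul_le_mul_right step2 _
        _ ≤ ENNReal.ofReal c * (ENNReal.ofReal (Real.sqrt (∫ x : Fin 3 → ℝ, S x)) *
            ENNReal.ofReal (I6 ^ ((1:ℝ)/6) * (4*R))) := by
            rw [step3]
            exact mul_le_mul_right (mul_le_mul_right hfactor2 _) _
        _ = ENNReal.ofReal (c * (Real.sqrt (∫ x : Fin 3 → ℝ, S x) * (I6 ^ ((1:ℝ)/6) * (4*R)))) := by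
            rw [← ENNReal.ofReal_mul (Real.sqrt_nonneg _), ← ENNReal.ofReal_mul hc0]
        _ = ENNReal.ofReal (96 * M * L * Real.sqrt (∫ x : Fin 3 → ℝ, S x) * I6 ^ ((1:ℝ)/6)) := by
            congr 1
            rw [hcdef]
            field_simp
            ring
    -- conclude
    have hnn : 0 ≤ 96 * M * L * Real.sqrt (∫ x : Fin 3 → ℝ, S x) * I6 ^ ((1:ℝ)/6) := by
      positivity
    calc |∫ x : Fin 3 → ℝ, f x| = ‖∫ x : Fin 3 → ℝ, f x‖ := (Real.norm_eq_abs _).symm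
      _ ≤ (∫⁻ x, ENNReal.ofReal ‖f x‖).toReal := norm_integral_le_lintegral_norm f
      _ ≤ (ENNReal.ofReal (96 * M * L * Real.sqrt (∫ x : Fin 3 → ℝ, S x)
            * I6 ^ ((1:ℝ)/6))).toReal := ENNReal.toReal_mono ENNReal.ofReal_ne_top hENN
      _ = 96 * M * L * Real.sqrt (∫ x : Fin 3 → ℝ, S x) * I6 ^ ((1:ℝ)/6) :=
          ENNReal.toReal_ofReal hnn
  constructor
  · intro R hR
    have := key R hR
    calc |∫ x : Fin 3 → ℝ, dot (cross (curl B x) (B x))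
          (cross (fun i => pd i (fun y => σ (R⁻¹ • y)) x) (B x))| ≤
        96 * M * L * Real.sqrt (∫ x : Fin 3 → ℝ, S x)
          * (∫ x in {x : Fin 3 → ℝ | R ≤ ‖x‖ ∧ ‖x‖ ≤ 2 * R}, ‖B x‖ ^ (6:ℕ)) ^ ((1:ℝ)/6) := this
      _ = 96 * M * L * Real.sqrt (∫ x : Fin 3 → ℝ, S x)
          * (∫ x in {x : Fin 3 → ℝ | R ≤ ‖x‖ ∧ ‖x‖ ≤ 2 * R}, ‖B x‖ ^ (6:ℕ)) ^ ((1:ℝ)/6) := rfl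
  -- the tendsto part
  · set K : ℝ := 96 * M * L * Real.sqrt (∫ x : Fin 3 → ℝ, S x) with hKdef
    have hK0 : 0 ≤ K := by positivity
    set G : ℝ → ℝ := fun R => ∫ x in {x : Fin 3 → ℝ | R ≤ ‖x‖}, ‖B x‖ ^ (6:ℕ) with hGdef
    have hGmeas : ∀ R : ℝ, MeasurableSet {x : Fin 3 → ℝ | R ≤ ‖x‖} := fun R =>
      (isClosed_le continuous_const continuous_norm).measurableSet
    have hGanti : Antitone (fun R : ℝ => {x : Fin 3 → ℝ | R ≤ ‖x‖}) := by
      intro R R' hRR' x hx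
      exact le_trans hRR' hx
    have hGtendsto : Filter.Tendsto G Filter.atTop (nhds 0) := by
      have h := tendsto_setIntegral_of_antitone (μ := volume)
        (f := fun x : Fin 3 → ℝ => ‖B x‖ ^ (6:ℕ)) hGmeas hGanti ⟨0, h6int.integrableOn⟩
      have hempty : (⋂ R : ℝ, {x : Fin 3 → ℝ | R ≤ ‖x‖}) = ∅ := by
        ext x
        simp only [Set.mem_iInter, Set.mem_setOf_eq, Set.mem_empty_iff_false, iff_false,
          not_forall, not_le]
        exact ⟨‖x‖ + 1, by linarith⟩
      rw [hempty] at h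
      simpa using h
    have hGnn : ∀ R, 0 ≤ G R := fun R => integral_nonneg (fun x => by positivity)
    -- `G^(1/6) → 0`
    have hG6 : Filter.Tendsto (fun R => K * (G R) ^ ((1:ℝ)/6)) Filter.atTop (nhds 0) := by
      have h1 : Filter.Tendsto (fun R => (G R) ^ ((1:ℝ)/6)) Filter.atTop (nhds 0) := by
        have hc : ContinuousAt (fun t : ℝ => t ^ ((1:ℝ)/6)) 0 :=
          Real.continuousAt_rpow_const 0 ((1:ℝ)/6) (Or.inr (by norm_num))
        have := hc.tendsto.comp hGtendsto
        simpa [Function.comp_def, Real.zero_rpow (by norm_num : ((1:ℝ)/6) ≠ 0)] using this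
      simpa using h1.const_mul K
    apply squeeze_zero_norm' _ hG6
    filter_upwards [Filter.eventually_ge_atTop (1:ℝ)] with R hR
    have h1 := key R hR
    have h2 : (∫ x in {x : Fin 3 → ℝ | R ≤ ‖x‖ ∧ ‖x‖ ≤ 2 * R}, ‖B x‖ ^ (6:ℕ)) ≤ G R := by
      apply setIntegral_mono_set h6int.integrableOn
        (Filter.Eventually.of_forall (fun x => by positivity))
      apply Filter.Eventually.of_forall
      intro x hx
      exact hx.1
    have h3 : (∫ x in {x : Fin 3 → ℝ | R ≤ ‖x‖ ∧ ‖x‖ ≤ 2 * R}, ‖B x‖ ^ (6:ℕ)) ^ ((1:ℝ)/6)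
        ≤ (G R) ^ ((1:ℝ)/6) :=
      Real.rpow_le_rpow (integral_nonneg (fun x => by positivity)) h2 (by norm_num)
    rw [Real.norm_eq_abs]
    calc |∫ x : Fin 3 → ℝ, dot (cross (curl B x) (B x))
          (cross (fun i => pd i (fun y => σ (R⁻¹ • y)) x) (B x))| ≤
        K * (∫ x in {x : Fin 3 → ℝ | R ≤ ‖x‖ ∧ ‖x‖ ≤ 2 * R}, ‖B x‖ ^ (6:ℕ)) ^ ((1:ℝ)/6) := h1
      _ ≤ K * (G R) ^ ((1:ℝ)/6) := mul_le_mul_of_nonneg_left h3 hK0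
end
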